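/- Let h be the function on (0,π)² given by the series h(x,y) = (4/π)·Σ_{k=0}^∞ (sin((2k+1)x)/(2k+1))·(F_{2k+1}(y) − coth((2k+1)π)·G_{2k+1}(y)). Then for every x with 0 < x < π/2, h_x(x, π/2)/h(x, π/2) < cot(x), where h_x denotes the partial derivative of h in its first variable. -/

import Mathlib

/-!
On the line `y = π/2` the series collapses: for odd `n`, `F_n(π/2) − coth(nπ) G_n(π/2) =
1 / cosh(nπ/2)`, so `h(x, π/2) = (4/π) S(x)` with `S(x) = ∑ sin(nx) / (n cosh(nπ/2))` (sum over
odd `n`). The claim becomes `S' sin < S cos`, i.e. positivity of the Wronskian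
`W = S cos − S' sin` of `S` and `sin` on `(0, π/2)`. Now `W(0) = W(π/2) = 0` and
`W' = −sin · (S + S'') = sin · Q` with `Q(x) = ∑ (n² − 1) sin(nx) / (n cosh(nπ/2))`. The `n = 1`
term of `Q` vanishes and, since `1 / cosh(nπ/2) ≈ 2 e^{−nπ/2}` decays geometrically, the
`n = 3` term `(8/3) sin 3x / cosh(3π/2)` dominates: `Q > 0` up to `π/3 − 0.1`, `Q' < 0` on
`[π/3 − 0.1, π/3 + 0.1]` and `Q < 0` from `π/3 + 0.1` on. So `W` first increases and then
decreases, and is positive in between its two zeros.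
-/

open Real Filter Set Topology

/-- Hyperbolic cotangent. -/
noncomputable def coth (t : ℝ) : ℝ := Real.cosh t / Real.sinh t

/-- `F n y = cosh (n y) + cosh (n (π − y))`. -/
noncomputable def F (n y : ℝ) : ℝ := Real.cosh (n * y) + Real.cosh (n * (π - y))

/-- `G n y = sinh (n y) + sinh (n (π − y))`. -/
noncomputable def G (n y : ℝ) : ℝ := Real.sinh (n * y) + Real.sinh (n * (π - y))

/-- The harmonic function `h` on `(0,π)²` given by its Fourier series. -/
noncomputable def h (x y : ℝ) : ℝ :=
  (4 / π) * ∑' k : ℕ, (Real.sin ((2 * k + 1) * x) / (2 * k + 1)) *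
    (F (2 * k + 1) y - coth ((2 * k + 1) * π) * G (2 * k + 1) y)

/-- Partial derivative of `h` in its first variable. -/
noncomputable def hx (x y : ℝ) : ℝ := deriv (fun x' => h x' y) x

lemma abs_sin_nat_mul_le (n : ℕ) (x : ℝ) : |sin (n * x)| ≤ n * |sin x| := by
  induction n with
  | zero => simp
  | succ n ih =>
    push_cast
    rw [add_mul, one_mul, sin_add]
    calc |sin (n * x) * cos x + cos (n * x) * sin x|
        ≤ |sin (n * x)| * |cos x| + |cos (n * x)| * |sin x| := by
          simpa only [abs_mul] using abs_add_le (sin (n * x) * cos x) (cos (n * x) * sin x)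
      _ ≤ n * |sin x| * 1 + 1 * |sin x| := by
          gcongr
          exacts [abs_cos_le_one _, abs_cos_le_one _]
      _ = (n + 1) * |sin x| := by ring

lemma abs_sin_odd_mul_le (k : ℕ) (x : ℝ) :
    |sin ((2 * k + 1) * x)| ≤ (2 * k + 1) * |sin x| := by
  exact_mod_cast abs_sin_nat_mul_le (2 * k + 1) x

lemma pos_of_deriv_changes_sign_once {f f' : ℝ → ℝ} {a b : ℝ}
    (hf : ∀ x ∈ Icc a b, HasDerivAt f (f' x) x) (ha : f a = 0) (hb : f b = 0)
    (hf' : ∀ s ∈ Ioo a b, ∀ t ∈ Ioo a b, s < t → f' s ≤ 0 → f' t < 0)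
    {x : ℝ} (hx : x ∈ Ioo a b) : 0 < f x := by
  have hderiv {c d : ℝ} (hac : a ≤ c) (hdb : d ≤ b) :
      ∀ y ∈ interior (Icc c d), HasDerivWithinAt f (f' y) (interior (Icc c d)) y := by
    intro y hy
    rw [interior_Icc] at hy
    exact (hf y ⟨by linarith [hy.1], by linarith [hy.2]⟩).hasDerivWithinAt
  have hcont {c d : ℝ} (hac : a ≤ c) (hdb : d ≤ b) : ContinuousOn f (Icc c d) := fun y hy =>
    (hf y ⟨hac.trans hy.1, hy.2.trans hdb⟩).continuousAt.continuousWithinAt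
  by_cases hturn : ∃ s ∈ Ioo a x, f' s ≤ 0
  · obtain ⟨s, hs, hfs⟩ := hturn
    have hanti : StrictAntiOn f (Icc x b) :=
      strictAntiOn_of_hasDerivWithinAt_neg (convex_Icc x b) (hcont hx.1.le le_rfl)
        (hderiv hx.1.le le_rfl) fun t ht => by
          rw [interior_Icc] at ht
          exact hf' s ⟨hs.1, hs.2.trans hx.2⟩ t ⟨hs.1.trans (hs.2.trans ht.1), ht.2⟩
            (hs.2.trans ht.1) hfs
    simpa [hb] using hanti ⟨le_rfl, hx.2.le⟩ ⟨hx.2.le, le_rfl⟩ hx.2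
  · push Not at hturn
    have hmono : StrictMonoOn f (Icc a x) :=
      strictMonoOn_of_hasDerivWithinAt_pos (convex_Icc a x) (hcont le_rfl hx.2.le)
        (hderiv le_rfl hx.2.le) fun t ht => by
          rw [interior_Icc] at ht
          exact hturn t ht
    simpa [ha] using hmono ⟨le_rfl, hx.1.le⟩ ⟨hx.1.le, le_rfl⟩ hx.1

noncomputable def oddSinSeries (a : ℕ → ℝ) (x : ℝ) : ℝ := ∑' k : ℕ, a k * sin ((2 * k + 1) * x)

noncomputable def oddCosSeries (a : ℕ → ℝ) (x : ℝ) : ℝ := ∑' k : ℕ, a k * cos ((2 * k + 1) * x)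

def RapidDecay (a : ℕ → ℝ) : Prop :=
  ∀ j : ℕ, Summable fun k : ℕ => (2 * k + 1 : ℝ) ^ j * |a k|

noncomputable def wronskianSin (a : ℕ → ℝ) (x : ℝ) : ℝ :=
  oddSinSeries a x * cos x - oddCosSeries (fun k => (2 * k + 1) * a k) x * sin x

namespace RapidDecay

variable {a b : ℕ → ℝ}

lemma of_abs_le (ha : RapidDecay a) (hba : ∀ k, |b k| ≤ |a k|) : RapidDecay b := fun j =>
  (ha j).of_nonneg_of_le (fun _ => by positivity) fun k =>
    mul_le_mul_of_nonneg_left (hba k) (by positivity)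

lemma odd_mul (ha : RapidDecay a) : RapidDecay fun k => (2 * k + 1) * a k := fun j =>
  (ha (j + 1)).congr fun k => by
    rw [abs_mul, abs_of_pos (by positivity : (0 : ℝ) < 2 * k + 1), pow_succ, mul_assoc]

lemma summable_mul_sin (ha : RapidDecay a) (x : ℝ) :
    Summable fun k : ℕ => a k * sin ((2 * k + 1) * x) :=
  (ha 0).of_norm_bounded fun k => by
    simpa [abs_mul] using mul_le_mul_of_nonneg_left (abs_sin_le_one _) (abs_nonneg (a k))

lemma summable_mul_cos (ha : RapidDecay a) (x : ℝ) :
    Summable fun k : ℕ => a k * cos ((2 * k + 1) * x) :=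
  (ha 0).of_norm_bounded fun k => by
    simpa [abs_mul] using mul_le_mul_of_nonneg_left (abs_cos_le_one _) (abs_nonneg (a k))

lemma hasDerivAt_oddSinSeries (ha : RapidDecay a) (x : ℝ) :
    HasDerivAt (oddSinSeries a) (oddCosSeries (fun k => (2 * k + 1) * a k) x) x := by
  refine hasDerivAt_tsum (g := fun (k : ℕ) (y : ℝ) => a k * sin ((2 * k + 1) * y))
    (g' := fun (k : ℕ) (y : ℝ) => (2 * k + 1) * a k * cos ((2 * k + 1) * y))
    (ha 1) (fun k y => ?_) (fun k y => ?_) (ha.summable_mul_sin 0) x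
  · exact ((((hasDerivAt_id' y).const_mul (2 * k + 1 : ℝ)).sin).const_mul (a k)).congr_deriv
      (by ring)
  · rw [norm_mul, norm_mul, norm_of_nonneg (by positivity), norm_eq_abs, norm_eq_abs, pow_one]
    exact mul_le_of_le_one_right (by positivity) (abs_cos_le_one _)

lemma hasDerivAt_oddCosSeries (ha : RapidDecay a) (x : ℝ) :
    HasDerivAt (oddCosSeries a) (-oddSinSeries (fun k => (2 * k + 1) * a k) x) x := by
  rw [oddSinSeries, ← tsum_neg]
  refine hasDerivAt_tsum (g := fun (k : ℕ) (y : ℝ) => a k * cos ((2 * k + 1) * y))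
    (g' := fun (k : ℕ) (y : ℝ) => -((2 * k + 1) * a k * sin ((2 * k + 1) * y)))
    (ha 1) (fun k y => ?_) (fun k y => ?_) (ha.summable_mul_cos 0) x
  · exact ((((hasDerivAt_id' y).const_mul (2 * k + 1 : ℝ)).cos).const_mul (a k)).congr_deriv
      (by ring)
  · rw [norm_neg, norm_mul, norm_mul, norm_of_nonneg (by positivity), norm_eq_abs, norm_eq_abs,
      pow_one]
    exact mul_le_of_le_one_right (by positivity) (abs_sin_le_one _)

lemma oddSinSeries_sub (ha : RapidDecay a) (hb : RapidDecay b) (x : ℝ) :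
    oddSinSeries a x - oddSinSeries b x = oddSinSeries (fun k => a k - b k) x := by
  simp only [oddSinSeries, sub_mul]
  exact ((ha.summable_mul_sin x).tsum_sub (hb.summable_mul_sin x)).symm

lemma hasDerivAt_wronskianSin (ha : RapidDecay a) (x : ℝ) :
    HasDerivAt (wronskianSin a)
      (sin x * oddSinSeries (fun k => ((2 * k + 1) ^ 2 - 1) * a k) x) x := by
  have hS := ha.hasDerivAt_oddSinSeries x
  have hS' := ha.odd_mul.hasDerivAt_oddCosSeries x
  refine ((hS.mul (hasDerivAt_cos x)).sub (hS'.mul (hasDerivAt_sin x))).congr_deriv ?_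
  have hcoeff : (fun k : ℕ => ((2 * k + 1 : ℝ) ^ 2 - 1) * a k) =
      fun k => (2 * k + 1) * ((2 * k + 1) * a k) - a k := by
    funext k; ring
  rw [hcoeff, ← ha.odd_mul.odd_mul.oddSinSeries_sub ha x]
  ring

end RapidDecay

lemma wronskianSin_zero (a : ℕ → ℝ) : wronskianSin a 0 = 0 := by
  simp [wronskianSin, oddSinSeries]

lemma oddCosSeries_pi_div_two (a : ℕ → ℝ) : oddCosSeries a (π / 2) = 0 := by
  have hcos (k : ℕ) : cos ((2 * k + 1) * (π / 2)) = 0 := by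
    rw [show (2 * k + 1 : ℝ) * (π / 2) = k * π + π / 2 by ring, cos_add_pi_div_two,
      sin_nat_mul_pi, neg_zero]
  simp [oddCosSeries, hcos]

lemma wronskianSin_pi_div_two (a : ℕ → ℝ) : wronskianSin a (π / 2) = 0 := by
  simp [wronskianSin, oddCosSeries_pi_div_two]

lemma exp_pi_div_two_gt : 4.8 < exp (π / 2) := by
  have hsum := sum_le_exp_of_nonneg (x := 1.57) (by norm_num) 9
  norm_num [Finset.sum_range_succ, Nat.factorial] at hsum
  have := exp_lt_exp.2 (show (1.57 : ℝ) < π / 2 by linarith [pi_gt_d4])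
  linarith

lemma exp_pi_div_two_lt : exp (π / 2) < 5 := by
  have hbound := exp_bound' (x := 0.7854) (by norm_num) (by norm_num) (n := 4) (by norm_num)
  norm_num [Finset.sum_range_succ, Nat.factorial] at hbound
  have hmono := exp_le_exp.2 (show π / 4 ≤ 0.7854 by linarith [pi_lt_d4])
  have hsq : exp (π / 2) = exp (π / 4) ^ 2 := by rw [← exp_nat_mul]; ring_nf
  nlinarith [exp_pos (π / 4)]

lemma exp_odd_mul_pi_div_two (k : ℕ) :
    exp ((2 * k + 1) * (π / 2)) = exp (π / 2) ^ (2 * k + 1) := by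
  rw [← exp_nat_mul]; push_cast; rfl

noncomputable def hCoeff (k : ℕ) : ℝ := ((2 * k + 1) * cosh ((2 * k + 1) * (π / 2)))⁻¹

lemma hCoeff_pos (k : ℕ) : 0 < hCoeff k := by
  unfold hCoeff; positivity

lemma odd_mul_hCoeff (k : ℕ) : (2 * k + 1) * hCoeff k = (cosh ((2 * k + 1) * (π / 2)))⁻¹ := by
  rw [hCoeff, mul_inv, ← mul_assoc, mul_inv_cancel₀ (by positivity), one_mul]

-- `1 / cosh (nπ/2)` lies between `e^{-nπ/2}` and `2 e^{-nπ/2}`, and `0.2 < e^{-π/2} < 0.21`.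
lemma odd_mul_hCoeff_le (k : ℕ) : (2 * k + 1) * hCoeff k ≤ 2 * 0.21 ^ (2 * k + 1) := by
  rw [odd_mul_hCoeff, inv_le_iff_one_le_mul₀ (cosh_pos _)]
  have hcosh : exp (π / 2) ^ (2 * k + 1) ≤ 2 * cosh ((2 * k + 1) * (π / 2)) := by
    rw [← exp_odd_mul_pi_div_two, cosh_eq]
    linarith [exp_pos (-((2 * k + 1) * (π / 2)))]
  calc (1 : ℝ) ≤ (0.21 * 4.8) ^ (2 * k + 1) := one_le_pow₀ (by norm_num)
    _ ≤ 0.21 ^ (2 * k + 1) * exp (π / 2) ^ (2 * k + 1) := by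
        rw [mul_pow]; gcongr; exact exp_pi_div_two_gt.le
    _ ≤ 2 * 0.21 ^ (2 * k + 1) * cosh ((2 * k + 1) * (π / 2)) := by
        nlinarith [pow_pos (by norm_num : (0 : ℝ) < 0.21) (2 * k + 1)]

lemma pow_le_odd_mul_hCoeff (k : ℕ) : 0.2 ^ (2 * k + 1) ≤ (2 * k + 1) * hCoeff k := by
  rw [odd_mul_hCoeff, ← one_div, le_div_iff₀ (cosh_pos _)]
  have hcosh : cosh ((2 * k + 1) * (π / 2)) ≤ exp (π / 2) ^ (2 * k + 1) := by
    rw [← exp_odd_mul_pi_div_two, cosh_eq]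
    have : exp (-((2 * k + 1) * (π / 2))) ≤ exp ((2 * k + 1) * (π / 2)) :=
      exp_le_exp.2 (by nlinarith [pi_pos])
    linarith
  calc 0.2 ^ (2 * k + 1) * cosh ((2 * k + 1) * (π / 2))
      ≤ 0.2 ^ (2 * k + 1) * 5 ^ (2 * k + 1) := by
        gcongr; exact hcosh.trans (pow_le_pow_left₀ (exp_pos _).le exp_pi_div_two_lt.le _)
    _ = 1 := by rw [← mul_pow]; norm_num

lemma hCoeff_le (k : ℕ) : hCoeff k ≤ 2 * 0.21 ^ (2 * k + 1) :=
  (le_mul_of_one_le_left (hCoeff_pos k).le (by linarith [(k.cast_nonneg : (0 : ℝ) ≤ k)])).trans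
    (odd_mul_hCoeff_le k)

lemma rapidDecay_hCoeff : RapidDecay hCoeff := fun j => by
  have hgeom : Summable fun n : ℕ => (n : ℝ) ^ j * 0.21 ^ n :=
    summable_pow_mul_geometric_of_norm_lt_one j (by norm_num)
  have hodd : Summable fun k : ℕ => (2 * k + 1 : ℝ) ^ j * 0.21 ^ (2 * k + 1) := by
    have := hgeom.comp_injective (i := fun k : ℕ => 2 * k + 1) fun a b hab => by
      simp only at hab; omega
    simpa [Function.comp_def] using this
  refine (hodd.mul_left 2).of_nonneg_of_le (fun _ => by positivity) fun k => ?_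
  rw [abs_of_pos (hCoeff_pos k), mul_left_comm]
  gcongr
  exact hCoeff_le k

lemma odd_add_le_mul_two_pow {m : ℕ} (hm : 1 ≤ m) (k : ℕ) :
    2 * ((k + m : ℕ) : ℝ) + 1 ≤ (2 * m + 1) * 2 ^ k := by
  induction k with
  | zero => simp
  | succ k ih =>
    have : (1 : ℝ) ≤ m := by exact_mod_cast hm
    push_cast at ih ⊢
    rw [pow_succ]
    linarith

lemma odd_pow_mul_hCoeff_add_le {m : ℕ} (hm : 1 ≤ m) (j k : ℕ) :
    (2 * ((k + m : ℕ) : ℝ) + 1) ^ (j + 1) * hCoeff (k + m) ≤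
      2 * (2 * m + 1) ^ j * 0.21 ^ (2 * m + 1) * (2 ^ j * 0.21 ^ 2) ^ k := by
  have hodd : (2 * ((k + m : ℕ) : ℝ) + 1) * hCoeff (k + m) ≤
      2 * (0.21 ^ (2 * m + 1) * (0.21 ^ 2) ^ k) := by
    refine (odd_mul_hCoeff_le (k + m)).trans_eq ?_
    rw [← pow_mul, ← pow_add]; ring_nf
  calc (2 * ((k + m : ℕ) : ℝ) + 1) ^ (j + 1) * hCoeff (k + m)
      = (2 * ((k + m : ℕ) : ℝ) + 1) ^ j * ((2 * ((k + m : ℕ) : ℝ) + 1) * hCoeff (k + m)) := by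
        ring
    _ ≤ ((2 * m + 1) * 2 ^ k) ^ j * (2 * (0.21 ^ (2 * m + 1) * (0.21 ^ 2) ^ k)) :=
        mul_le_mul (pow_le_pow_left₀ (by positivity) (odd_add_le_mul_two_pow hm k) j) hodd
          (mul_pos (by positivity) (hCoeff_pos _)).le (by positivity)
    _ = 2 * (2 * m + 1) ^ j * 0.21 ^ (2 * m + 1) * (2 ^ j * 0.21 ^ 2) ^ k := by
        rw [mul_pow, ← pow_mul, mul_comm k j, pow_mul]; ring

lemma abs_tsum_le_of_le_odd_pow_mul_hCoeff {m : ℕ} (hm : 1 ≤ m) {j : ℕ}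
    (hj : 2 ^ j * (0.21 : ℝ) ^ 2 < 1) {C : ℝ} {f : ℕ → ℝ}
    (hf : ∀ k, |f k| ≤ C * ((2 * ((k + m : ℕ) : ℝ) + 1) ^ (j + 1) * hCoeff (k + m))) :
    |∑' k, f k| ≤ C * (2 * (2 * m + 1) ^ j * 0.21 ^ (2 * m + 1)) * (1 - 2 ^ j * 0.21 ^ 2)⁻¹ := by
  have hC : 0 ≤ C := nonneg_of_mul_nonneg_left ((abs_nonneg _).trans (hf 0))
    (by have := hCoeff_pos (0 + m); positivity)
  rw [mul_assoc]
  refine tsum_of_norm_bounded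
    (((hasSum_geometric_of_lt_one (by positivity) hj).mul_left _).mul_left C)
    fun k => (norm_eq_abs (f k)).trans_le <| (hf k).trans ?_
  exact mul_le_mul_of_nonneg_left (odd_pow_mul_hCoeff_add_le hm j k) hC

lemma F_sub_coth_mul_G_pi_div_two {n : ℝ} (hn : n ≠ 0) :
    F n (π / 2) - coth (n * π) * G n (π / 2) = (cosh (n * (π / 2)))⁻¹ := by
  have hs : sinh (n * (π / 2)) ≠ 0 := sinh_ne_zero.2 (mul_ne_zero hn (by positivity))
  have hc : cosh (n * (π / 2)) ≠ 0 := (cosh_pos _).ne'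
  rw [F, G, coth, show π - π / 2 = π / 2 by ring, show n * π = 2 * (n * (π / 2)) by ring,
    sinh_two_mul, cosh_two_mul]
  generalize n * (π / 2) = t at hs hc ⊢
  field_simp
  linear_combination 2 * cosh_sq t

lemma h_pi_div_two (x : ℝ) : h x (π / 2) = 4 / π * oddSinSeries hCoeff x := by
  rw [h, oddSinSeries]
  congr 1
  refine tsum_congr fun k => ?_
  rw [F_sub_coth_mul_G_pi_div_two (by positivity), hCoeff, mul_inv]
  ring

lemma hx_pi_div_two (x : ℝ) :
    hx x (π / 2) = 4 / π * oddCosSeries (fun k => (2 * k + 1) * hCoeff k) x := by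
  simp only [hx, h_pi_div_two]
  exact ((rapidDecay_hCoeff.hasDerivAt_oddSinSeries x).const_mul _).deriv

lemma oddSinSeries_hCoeff_pos {x : ℝ} (hx0 : 0 < x) (hxπ : x < π) :
    0 < oddSinSeries hCoeff x := by
  have hsin := sin_pos_of_pos_of_lt_pi hx0 hxπ
  have htail := abs_tsum_le_of_le_odd_pow_mul_hCoeff le_rfl (j := 0) (by norm_num) (C := sin x)
    (f := fun k => hCoeff (k + 1) * sin ((2 * ((k + 1 : ℕ) : ℝ) + 1) * x)) fun k => by
      have := abs_sin_odd_mul_le (k + 1) x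
      rw [abs_of_pos hsin] at this
      rw [abs_mul, abs_of_pos (hCoeff_pos _), zero_add, pow_one]
      nlinarith [hCoeff_pos (k + 1)]
  have htail' : |∑' k, hCoeff (k + 1) * sin ((2 * ((k + 1 : ℕ) : ℝ) + 1) * x)| ≤ sin x * 0.02 :=
    htail.trans (by rw [mul_assoc]; exact mul_le_mul_of_nonneg_left (by norm_num) hsin.le)
  have h0 : 0.2 ≤ hCoeff 0 := by simpa using pow_le_odd_mul_hCoeff 0
  rw [oddSinSeries, ← (rapidDecay_hCoeff.summable_mul_sin x).sum_add_tsum_nat_add 1,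
    Finset.sum_range_one]
  norm_num only [Nat.cast_zero, mul_zero, zero_add, one_mul]
  nlinarith [neg_abs_le (∑' k, hCoeff (k + 1) * sin ((2 * ((k + 1 : ℕ) : ℝ) + 1) * x))]

noncomputable def qCoeff (k : ℕ) : ℝ := ((2 * k + 1) ^ 2 - 1) * hCoeff k

lemma qCoeff_nonneg (k : ℕ) : 0 ≤ qCoeff k :=
  mul_nonneg (by nlinarith [(k.cast_nonneg : (0 : ℝ) ≤ k)]) (hCoeff_pos k).le

lemma qCoeff_le (k : ℕ) : qCoeff k ≤ (2 * k + 1) ^ 2 * hCoeff k := by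
  unfold qCoeff; nlinarith [hCoeff_pos k]

lemma rapidDecay_qCoeff : RapidDecay qCoeff :=
  rapidDecay_hCoeff.odd_mul.odd_mul.of_abs_le fun k => by
    rw [abs_of_nonneg (qCoeff_nonneg k), abs_of_nonneg (by have := hCoeff_pos k; positivity),
      ← mul_assoc, ← sq]
    exact qCoeff_le k

lemma abs_qCoeff_mul_sin_le (k : ℕ) (t : ℝ) :
    |qCoeff k * sin ((2 * k + 1) * t)| ≤ (2 * k + 1) ^ 2 * hCoeff k := by
  rw [abs_mul, abs_of_nonneg (qCoeff_nonneg k)]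
  exact (mul_le_of_le_one_right (qCoeff_nonneg k) (abs_sin_le_one _)).trans (qCoeff_le k)

lemma abs_qCoeff_mul_sin_le_mul_abs_sin (k : ℕ) (t : ℝ) :
    |qCoeff k * sin ((2 * k + 1) * t)| ≤ |sin t| * ((2 * k + 1) ^ 3 * hCoeff k) := by
  rw [abs_mul, abs_of_nonneg (qCoeff_nonneg k)]
  calc qCoeff k * |sin ((2 * k + 1) * t)|
      ≤ ((2 * k + 1) ^ 2 * hCoeff k) * ((2 * k + 1) * |sin t|) :=
        mul_le_mul (qCoeff_le k) (abs_sin_odd_mul_le k t) (abs_nonneg _)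
          (by have := hCoeff_pos k; positivity)
    _ = |sin t| * ((2 * k + 1) ^ 3 * hCoeff k) := by ring

lemma abs_odd_mul_qCoeff_mul_cos_le (k : ℕ) (t : ℝ) :
    |(2 * k + 1) * qCoeff k * cos ((2 * k + 1) * t)| ≤ (2 * k + 1) ^ 3 * hCoeff k := by
  have hodd : (0 : ℝ) < 2 * k + 1 := by positivity
  have hq := qCoeff_nonneg k
  rw [abs_mul, abs_mul, abs_of_pos hodd, abs_of_nonneg hq]
  calc (2 * k + 1) * qCoeff k * |cos ((2 * k + 1) * t)|
      ≤ (2 * k + 1) * qCoeff k := mul_le_of_le_one_right (by positivity) (abs_cos_le_one _)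
    _ ≤ (2 * k + 1) * ((2 * k + 1) ^ 2 * hCoeff k) :=
        mul_le_mul_of_nonneg_left (qCoeff_le k) hodd.le
    _ = (2 * k + 1) ^ 3 * hCoeff k := by ring

lemma oddSinSeries_qCoeff (t : ℝ) :
    oddSinSeries qCoeff t = 8 * hCoeff 1 * sin (3 * t) +
      ∑' k, qCoeff (k + 2) * sin ((2 * ((k + 2 : ℕ) : ℝ) + 1) * t) := by
  rw [oddSinSeries, ← (rapidDecay_qCoeff.summable_mul_sin t).sum_add_tsum_nat_add 2,
    Finset.sum_range_succ, Finset.sum_range_one]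
  congr 1
  norm_num [qCoeff]

lemma oddCosSeries_odd_mul_qCoeff (t : ℝ) :
    oddCosSeries (fun k => (2 * k + 1) * qCoeff k) t = 24 * hCoeff 1 * cos (3 * t) +
      ∑' k, (2 * ((k + 2 : ℕ) : ℝ) + 1) * qCoeff (k + 2) *
        cos ((2 * ((k + 2 : ℕ) : ℝ) + 1) * t) := by
  rw [oddCosSeries, ← (rapidDecay_qCoeff.odd_mul.summable_mul_cos t).sum_add_tsum_nat_add 2,
    Finset.sum_range_succ, Finset.sum_range_one]
  congr 1
  norm_num [qCoeff, ← mul_assoc]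

lemma hCoeff_one_ge : 0.008 ≤ 3 * hCoeff 1 := by
  have := pow_le_odd_mul_hCoeff 1
  norm_num at this
  linarith

lemma sin_three_mul_ge {t : ℝ} (h0 : 0 ≤ sin t) (h1 : sin t ≤ 1 / 2) : 2 * sin t ≤ sin (3 * t) := by
  rw [sin_three_mul]
  nlinarith [mul_nonneg (mul_nonneg h0 (by linarith : 0 ≤ 1 - 2 * sin t))
    (by linarith : 0 ≤ 1 + 2 * sin t)]

lemma lt_sin_of_mem_Icc {u : ℝ} (h1 : 0.3 ≤ u) (h2 : u ≤ π - 0.3) : 0.29 < sin u := by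
  have hsin : (0.29 : ℝ) < sin 0.3 := by linarith [sin_gt_sub_cube (x := 0.3) (by norm_num)]
  have key (v : ℝ) (hv1 : 0.3 ≤ v) (hv2 : v ≤ π / 2) : 0.29 < sin v :=
    hsin.trans_le (sin_le_sin_of_le_of_le_pi_div_two (by linarith [pi_pos]) hv2 hv1)
  rcases le_total u (π / 2) with h | h
  · exact key u h1 h
  · rw [← sin_pi_sub]; exact key _ (by linarith) (by linarith)

lemma abs_tsum_qCoeff_tail_le (t : ℝ) :
    |∑' k, qCoeff (k + 2) * sin ((2 * ((k + 2 : ℕ) : ℝ) + 1) * t)| ≤ 0.0045 := by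
  refine (abs_tsum_le_of_le_odd_pow_mul_hCoeff (m := 2) (by norm_num) (j := 1) (by norm_num)
    (C := 1) fun k => (abs_qCoeff_mul_sin_le (k + 2) t).trans_eq (one_mul _).symm).trans ?_
  norm_num

lemma oddSinSeries_qCoeff_pos {t : ℝ} (ht0 : 0 < t) (ht : t ≤ π / 3 - 0.1) :
    0 < oddSinSeries qCoeff t := by
  have hsin : 0 < sin t := sin_pos_of_pos_of_lt_pi ht0 (by linarith [pi_pos])
  have h1 := hCoeff_one_ge
  rw [oddSinSeries_qCoeff]
  set tail := ∑' k, qCoeff (k + 2) * sin ((2 * ((k + 2 : ℕ) : ℝ) + 1) * t)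
  have htail := neg_abs_le tail
  -- near `0` the leading term is only of size `sin t`, so the tail is measured against `sin t`
  rcases le_total t 0.5 with hsmall | hmid
  · have hbound : |tail| ≤ sin t * 0.025 := by
      refine (abs_tsum_le_of_le_odd_pow_mul_hCoeff (m := 2) (by norm_num) (j := 2) (by norm_num)
        fun k => (abs_qCoeff_mul_sin_le_mul_abs_sin (k + 2) t).trans_eq
          (by rw [abs_of_pos hsin])).trans ?_
      rw [mul_assoc]; exact mul_le_mul_of_nonneg_left (by norm_num) hsin.le
    have h3 := sin_three_mul_ge hsin.le ((sin_le ht0.le).trans (by linarith))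
    nlinarith
  · have hbound := abs_tsum_qCoeff_tail_le t
    have h3 := lt_sin_of_mem_Icc (u := 3 * t) (by linarith) (by linarith)
    nlinarith

lemma oddSinSeries_qCoeff_neg {t : ℝ} (ht : π / 3 + 0.1 ≤ t) (ht' : t ≤ π / 2) :
    oddSinSeries qCoeff t < 0 := by
  have h1 := hCoeff_one_ge
  rw [oddSinSeries_qCoeff]
  set tail := ∑' k, qCoeff (k + 2) * sin ((2 * ((k + 2 : ℕ) : ℝ) + 1) * t)
  have hbound := abs_tsum_qCoeff_tail_le t
  have h3 : sin (3 * t) < -0.29 := by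
    rw [← neg_neg (sin (3 * t)), ← sin_sub_pi, neg_lt_neg_iff]
    exact lt_sin_of_mem_Icc (by linarith) (by linarith)
  nlinarith [le_abs_self tail]

lemma oddCosSeries_odd_mul_qCoeff_neg {t : ℝ} (ht : π / 3 - 0.1 ≤ t) (ht' : t ≤ π / 3 + 0.1) :
    oddCosSeries (fun k => (2 * k + 1) * qCoeff k) t < 0 := by
  have h1 := hCoeff_one_ge
  rw [oddCosSeries_odd_mul_qCoeff]
  set tail := ∑' k, (2 * ((k + 2 : ℕ) : ℝ) + 1) * qCoeff (k + 2) *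
    cos ((2 * ((k + 2 : ℕ) : ℝ) + 1) * t)
  have hbound : |tail| ≤ 0.025 := by
    refine (abs_tsum_le_of_le_odd_pow_mul_hCoeff (m := 2) (by norm_num) (j := 2) (by norm_num)
      (C := 1) fun k =>
        (abs_odd_mul_qCoeff_mul_cos_le (k + 2) t).trans_eq (one_mul _).symm).trans ?_
    norm_num
  have h3 : cos (3 * t) ≤ -0.955 := by
    rw [← neg_neg (cos (3 * t)), ← cos_sub_pi, neg_le_neg_iff]
    have : |3 * t - π| ≤ 0.3 := abs_le.2 ⟨by linarith, by linarith⟩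
    nlinarith [one_sub_sq_div_two_le_cos (x := 3 * t - π), sq_abs (3 * t - π),
      abs_nonneg (3 * t - π)]
  nlinarith [le_abs_self tail]

lemma oddSinSeries_qCoeff_neg_of_nonpos {s t : ℝ} (hs : 0 < s) (hst : s < t) (ht : t ≤ π / 2)
    (hQs : oddSinSeries qCoeff s ≤ 0) : oddSinSeries qCoeff t < 0 := by
  have hs' : π / 3 - 0.1 < s := by
    by_contra! h
    exact (oddSinSeries_qCoeff_pos hs h).not_ge hQs
  rcases le_or_gt (π / 3 + 0.1) t with ht' | ht'
  · exact oddSinSeries_qCoeff_neg ht' ht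
  · have hanti : StrictAntiOn (oddSinSeries qCoeff) (Icc (π / 3 - 0.1) (π / 3 + 0.1)) :=
      strictAntiOn_of_deriv_neg (convex_Icc _ _)
        (HasDerivAt.continuousOn fun y _ => rapidDecay_qCoeff.hasDerivAt_oddSinSeries y)
        fun y hy => by
          rw [interior_Icc] at hy
          rw [(rapidDecay_qCoeff.hasDerivAt_oddSinSeries y).deriv]
          exact oddCosSeries_odd_mul_qCoeff_neg hy.1.le hy.2.le
    exact (hanti ⟨hs'.le, by linarith⟩ ⟨by linarith, ht'.le⟩ hst).trans_le hQs

lemma wronskianSin_hCoeff_pos {x : ℝ} (hx0 : 0 < x) (hx : x < π / 2) :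
    0 < wronskianSin hCoeff x := by
  refine pos_of_deriv_changes_sign_once
    (fun y _ => rapidDecay_hCoeff.hasDerivAt_wronskianSin y) (wronskianSin_zero _)
    (wronskianSin_pi_div_two _) (fun s hs t ht hst hfs => ?_) ⟨hx0, hx⟩
  have hsin {y : ℝ} (hy : y ∈ Ioo 0 (π / 2)) : 0 < sin y :=
    sin_pos_of_pos_of_lt_pi hy.1 (by linarith [hy.2, pi_pos])
  have hQs : oddSinSeries qCoeff s ≤ 0 := le_of_not_gt fun h => (mul_pos (hsin hs) h).not_ge hfs
  exact mul_neg_of_pos_of_neg (hsin ht) (oddSinSeries_qCoeff_neg_of_nonpos hs.1 hst ht.2.le hQs)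

theorem stmt4 :
    ∀ x : ℝ, 0 < x → x < π / 2 →
      hx x (π / 2) / h x (π / 2) < Real.cot x := by
  intro x hx0 hxπ
  have hsin : 0 < sin x := sin_pos_of_pos_of_lt_pi hx0 (by linarith [pi_pos])
  have hS := oddSinSeries_hCoeff_pos hx0 (by linarith [pi_pos])
  have hW := wronskianSin_hCoeff_pos hx0 hxπ
  rw [wronskianSin, sub_pos] at hW
  rw [hx_pi_div_two, h_pi_div_two, mul_div_mul_left _ _ (by positivity), cot_eq_cos_div_sin,
    div_lt_div_iff₀ hS hsin]
  linarith
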